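/- arXiv:2410.09451 — 9 statements merged into one kernel-verified Lean document; each statement's English description precedes it below -/
import Mathlib

section
/- Let 0 < τ_min < τ_max be reals, let n ≥ 1 be a natural number, let x : ℝ → ℝ be n times continuously differentiable, and let k : ℝ → ℝ be continuously differentiable with k(τ_min) = 0 and k(τ_max) = 0. Then the delayed convolution I(t) = ∫_{t−τ_max}^{t−τ_min} x(s) k(t−s) ds is n times continuously differentiable on ℝ and for every j ≤ n and every t ∈ ℝ its j-th derivative satisfies I^{(j)}(t) = ∫_{t−τ_max}^{t−τ_min} x^{(j)}(s) k(t−s) ds; in particular I has no loss of smoothness (no breaking points) up to order n. -/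
open MeasureTheory intervalIntegral

private lemma conv_continuous (a b : ℝ) {x k : ℝ → ℝ} (hx : Continuous x) (hk : Continuous k) :
    Continuous fun t : ℝ => ∫ s in a..b, x (t - s) * k s := by
  apply intervalIntegral.continuous_parametric_intervalIntegral_of_continuous' (μ := volume)
  exact (hx.comp (continuous_fst.sub continuous_snd)).mul (hk.comp continuous_snd)

private lemma conv_hasDerivAt (a b : ℝ) {x k : ℝ → ℝ}
    (hxd : Differentiable ℝ x) (hx' : Continuous (deriv x)) (hk : Continuous k) (t : ℝ) :
    HasDerivAt (fun t : ℝ => ∫ s in a..b, x (t - s) * k s)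
      (∫ s in a..b, deriv x (t - s) * k s) t := by
  set L : ℝ := max |a| |b| with hL
  have hL0 : 0 ≤ L := le_trans (abs_nonneg a) (le_max_left _ _)
  obtain ⟨M, hM⟩ := (isCompact_Icc (a := t - 1 - L) (b := t + 1 + L)).exists_bound_of_continuousOn
    hx'.continuousOn
  obtain ⟨K, hK⟩ := (isCompact_uIcc (a := a) (b := b)).exists_bound_of_continuousOn hk.continuousOn
  have key := intervalIntegral.hasDerivAt_integral_of_dominated_loc_of_deriv_le
    (μ := volume) (a := a) (b := b)
    (F := fun u s => x (u - s) * k s) (F' := fun u s => deriv x (u - s) * k s)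
    (x₀ := t) (bound := fun _ => max M 0 * max K 0) (s := Metric.ball t 1) (Metric.ball_mem_nhds t zero_lt_one)
    (Filter.Eventually.of_forall fun u =>
      ((hxd.continuous.comp (continuous_const.sub continuous_id)).mul hk).aestronglyMeasurable)
    (((hxd.continuous.comp (continuous_const.sub continuous_id)).mul hk).intervalIntegrable a b)
    (((hx'.comp (continuous_const.sub continuous_id)).mul hk).aestronglyMeasurable)
    ?_ (intervalIntegrable_const) ?_
  · exact key.2
  · refine Filter.Eventually.of_forall fun s hs u hu => ?_
    have hs' : s ∈ Set.uIcc a b := Set.uIoc_subset_uIcc hs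
    have hs1 : min a b ≤ s := hs'.1
    have hs2 : s ≤ max a b := hs'.2
    have hb1 : -L ≤ min a b := by
      rcases min_le_iff.mpr (Or.inl (le_refl a)) with _
      have : -|a| ≤ a := neg_abs_le a
      have : -|b| ≤ b := neg_abs_le b
      rcases le_total a b with h | h
      · simp only [min_eq_left h]; have := neg_abs_le a
        have : |a| ≤ L := le_max_left _ _; linarith [neg_abs_le a]
      · simp only [min_eq_right h]
        have : |b| ≤ L := le_max_right _ _; linarith [neg_abs_le b]
    have hb2 : max a b ≤ L := max_le_max (le_abs_self a) (le_abs_self b)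
    have hu' : |u - t| < 1 := by simpa [Real.dist_eq] using Metric.mem_ball.mp hu
    have hu1 : t - 1 < u := by cases abs_lt.mp hu' with | intro h1 h2 => linarith
    have hu2 : u < t + 1 := by cases abs_lt.mp hu' with | intro h1 h2 => linarith
    have hmem : u - s ∈ Set.Icc (t - 1 - L) (t + 1 + L) := by
      constructor <;> [linarith; linarith]
    have h1 : ‖deriv x (u - s)‖ ≤ max M 0 := le_trans (hM _ hmem) (le_max_left _ _)
    have h2 : ‖k s‖ ≤ max K 0 := le_trans (hK _ hs') (le_max_left _ _)
    calc ‖deriv x (u - s) * k s‖ = ‖deriv x (u - s)‖ * ‖k s‖ := norm_mul _ _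
      _ ≤ max M 0 * max K 0 :=
        mul_le_mul h1 h2 (norm_nonneg _) (le_max_right _ _)
  · refine Filter.Eventually.of_forall fun s _ u _ => ?_
    have h1 : HasDerivAt (fun u : ℝ => x (u - s)) (deriv x (u - s) * 1) u :=
      (hxd (u - s)).hasDerivAt.comp u ((hasDerivAt_id u).sub_const s)
    simpa using h1.mul_const (k s)

/-- If `x` is `n` times continuously differentiable and the `C¹` kernel `k` vanishes at
both endpoints of its support, then the delayed convolution is `n` times continuously
differentiable and its `j`-th derivative is the delayed convolution of `x⁽ʲ⁾` with `k`:
no breaking points up to order `n`. -/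
theorem delayed_convolution_contDiff_of_kernel_vanishes
    (τmin τmax : ℝ) (h0 : 0 < τmin) (h1 : τmin < τmax)
    (n : ℕ) (hn : 1 ≤ n) (x k : ℝ → ℝ)
    (hx : ContDiff ℝ n x) (hk : ContDiff ℝ 1 k)
    (hkmin : k τmin = 0) (hkmax : k τmax = 0) :
    ContDiff ℝ n (fun t => ∫ s in (t - τmax)..(t - τmin), x s * k (t - s)) ∧
    ∀ j ≤ n, ∀ t : ℝ,
      iteratedDeriv j (fun t => ∫ s in (t - τmax)..(t - τmin), x s * k (t - s)) t
        = ∫ s in (t - τmax)..(t - τmin), iteratedDeriv j x s * k (t - s) := by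
  have hk0 : Continuous k := hk.continuous
  obtain ⟨hxcont, hxdiff⟩ := contDiff_nat_iff_iteratedDeriv.mp hx
  -- substitution: the delayed convolution in "kernel at s" form
  have hsub : ∀ (y : ℝ → ℝ) (t : ℝ),
      (∫ s in (t - τmax)..(t - τmin), y s * k (t - s))
        = ∫ s in τmin..τmax, y (t - s) * k s := by
    intro y t
    rw [show (∫ s in τmin..τmax, y (t - s) * k s)
        = ∫ s in τmin..τmax, (fun r => y r * k (t - r)) (t - s) from by
      congr 1; funext s; simp [sub_sub_cancel]]
    rw [intervalIntegral.integral_comp_sub_left (fun r => y r * k (t - r)) t]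
  have hEq : (fun t => ∫ s in (t - τmax)..(t - τmin), x s * k (t - s))
      = fun t => ∫ s in τmin..τmax, x (t - s) * k s := funext fun t => hsub x t
  have key : ∀ j, j ≤ n → iteratedDeriv j (fun t => ∫ s in τmin..τmax, x (t - s) * k s)
      = fun t => ∫ s in τmin..τmax, iteratedDeriv j x (t - s) * k s := by
    intro j
    induction j with
    | zero => intro _; simp
    | succ j ih =>
      intro hj
      have hj' : j ≤ n := Nat.le_of_succ_le hj
      have hjlt : j < n := hj
      rw [iteratedDeriv_succ, ih hj']
      funext t
      have hd := conv_hasDerivAt τmin τmax (hxdiff j hjlt)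
        (by rw [← iteratedDeriv_succ]; exact hxcont (j + 1) hj) hk0 t
      rw [hd.deriv]
      simp only [← iteratedDeriv_succ]
  constructor
  · rw [hEq]
    refine contDiff_nat_iff_iteratedDeriv.mpr ⟨fun m hm => ?_, fun m hm => ?_⟩
    · rw [key m hm]
      exact conv_continuous τmin τmax (hxcont m hm) hk0
    · rw [key m hm.le]
      intro t
      exact (conv_hasDerivAt τmin τmax (hxdiff m hm)
        (by rw [← iteratedDeriv_succ]; exact hxcont (m + 1) hm) hk0 t).differentiableAt
  · intro j hj t
    rw [hEq, key j hj, hsub (iteratedDeriv j x) t]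
end

section
/- Let 0 < τ_min < τ_max be reals and let k : ℝ → ℝ be twice continuously differentiable. Let x : ℝ → ℝ be continuous and suppose there exist continuously differentiable functions x₋, x₊ : ℝ → ℝ with x(s) = x₋(s) for all s ≤ 0 and x(s) = x₊(s) for all s ≥ 0. Let I(t) = ∫_{t−τ_max}^{t−τ_min} x(s) k(t−s) ds and let I′ denote its derivative (which exists everywhere by the Leibniz rule). Then I′ has a left derivative and a right derivative at t = τ_min, and their difference (right minus left) equals k(τ_min) · (x₊′(0) − x₋′(0)). In particular, if k(τ_min) ≠ 0 and x₊′(0) ≠ x₋′(0), then I is not twice differentiable at τ_min, i.e. t = τ_min is a breaking point. -/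
/-- The delayed convolution of a kernel with a solution having a derivative jump at `0`. -/
noncomputable def delayedConv (τmin τmax : ℝ) (x k : ℝ → ℝ) : ℝ → ℝ :=
  fun t => ∫ s in (t - τmax)..(t - τmin), x s * k (t - s)


open Set MeasureTheory Filter Metric intervalIntegral

lemma primitive_hasDerivAt {f : ℝ → ℝ} (hf : Continuous f) (y : ℝ) :
    HasDerivAt (fun y => ∫ s in (0:ℝ)..y, f s) (f y) y :=
  intervalIntegral.integral_hasDerivAt_right (hf.intervalIntegrable 0 y)
    (hf.stronglyMeasurableAtFilter _ _) hf.continuousAt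

/-- Leibniz rule for `t ↦ ∫ v in a..b, f (t - v) * κ v` with `f` merely continuous
and `κ` of class `C¹`. -/
lemma lemA {f κ κ' : ℝ → ℝ} (a b : ℝ) (hf : Continuous f)
    (hκ : ∀ v, HasDerivAt κ (κ' v) v) (hκ' : Continuous κ') (t₀ : ℝ) :
    HasDerivAt (fun t => ∫ v in a..b, f (t - v) * κ v)
      (f (t₀ - a) * κ a - f (t₀ - b) * κ b + ∫ v in a..b, f (t₀ - v) * κ' v) t₀ := by
  set F : ℝ → ℝ := fun y => ∫ s in (0:ℝ)..y, f s with hF_def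
  have hF : ∀ y, HasDerivAt F (f y) y := primitive_hasDerivAt hf
  have hFc : Continuous F :=
    (Differentiable.continuous (fun y => (hF y).differentiableAt))
  have hκc : Continuous κ :=
    (Differentiable.continuous (fun v => (hκ v).differentiableAt))
  -- integration by parts identity
  have parts : ∀ t, (∫ v in a..b, f (t - v) * κ v)
      = F (t - a) * κ a - F (t - b) * κ b + ∫ v in a..b, F (t - v) * κ' v := by
    intro t
    have hv : ∀ w ∈ uIcc a b, HasDerivAt (fun w => -F (t - w)) (f (t - w)) w := by
      intro w _
      have h1 : HasDerivAt (fun w : ℝ => t - w) (-1) w := (hasDerivAt_id w).const_sub t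
      have h2 := ((hF (t - w)).comp w h1).neg
      exact h2.congr_deriv (by ring : -(f (t - w) * -1) = f (t - w))
    have hu : ∀ w ∈ uIcc a b, HasDerivAt κ (κ' w) w := fun w _ => hκ w
    have hu' : IntervalIntegrable κ' volume a b := hκ'.intervalIntegrable a b
    have hv' : IntervalIntegrable (fun w => f (t - w)) volume a b :=
      (hf.comp (continuous_const.sub continuous_id)).intervalIntegrable a b
    have h := intervalIntegral.integral_mul_deriv_eq_deriv_mul hu hv hu' hv'
    -- h : ∫ w in a..b, κ w * f (t - w) = κ b * -F (t - b) - κ a * -F (t - a)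
    --      - ∫ w in a..b, κ' w * -F (t - w)
    have e1 : (∫ v in a..b, f (t - v) * κ v) = ∫ w in a..b, κ w * f (t - w) := by
      simp_rw [mul_comm]
    have e2 : (∫ w in a..b, κ' w * -F (t - w)) = -∫ w in a..b, F (t - w) * κ' w := by
      rw [← intervalIntegral.integral_neg]
      congr 1; funext w; ring
    rw [e1, h, e2]; ring
  -- derivative of each term
  have h1 : HasDerivAt (fun t => F (t - a) * κ a) (f (t₀ - a) * κ a) t₀ := by
    have := ((hF (t₀ - a)).comp t₀ ((hasDerivAt_id t₀).sub_const a)).mul_const (κ a)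
    simpa using this
  have h2 : HasDerivAt (fun t => F (t - b) * κ b) (f (t₀ - b) * κ b) t₀ := by
    have := ((hF (t₀ - b)).comp t₀ ((hasDerivAt_id t₀).sub_const b)).mul_const (κ b)
    simpa using this
  -- derivative of the remaining parameter integral, by dominated convergence
  have hK : HasDerivAt (fun t => ∫ v in a..b, F (t - v) * κ' v)
      (∫ v in a..b, f (t₀ - v) * κ' v) t₀ := by
    obtain ⟨C, hC⟩ : ∃ C, ∀ w ∈ Icc (t₀ - 1 - max a b) (t₀ + 1 - min a b), ‖f w‖ ≤ C :=
      isCompact_Icc.exists_bound_of_continuousOn hf.continuousOn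
    have key := intervalIntegral.hasDerivAt_integral_of_dominated_loc_of_deriv_le
      (μ := volume) (a := a) (b := b)
      (F := fun t v => F (t - v) * κ' v) (F' := fun t v => f (t - v) * κ' v)
      (x₀ := t₀) (bound := fun v => C * |κ' v|) (ball_mem_nhds t₀ one_pos)
      (Eventually.of_forall fun t =>
        (((hFc.comp (continuous_const.sub continuous_id)).mul hκ').aestronglyMeasurable).restrict)
      (((hFc.comp (continuous_const.sub continuous_id)).mul hκ').intervalIntegrable a b)
      (((hf.comp (continuous_const.sub continuous_id)).mul hκ').aestronglyMeasurable).restrict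
      ?_ ((continuous_const.mul hκ'.abs).intervalIntegrable a b) ?_
    · exact key.2
    · refine Eventually.of_forall fun v hv t ht => ?_
      have hv1 : min a b < v := hv.1
      have hv2 : v ≤ max a b := hv.2
      have ht' : |t - t₀| < 1 := by simpa [Real.dist_eq] using ht
      have habs := abs_lt.mp ht'
      have hmem : t - v ∈ Icc (t₀ - 1 - max a b) (t₀ + 1 - min a b) :=
        ⟨by linarith, by linarith⟩
      have := hC (t - v) hmem
      calc ‖f (t - v) * κ' v‖ = ‖f (t - v)‖ * |κ' v| := by
            simp [abs_mul]
        _ ≤ C * |κ' v| := mul_le_mul_of_nonneg_right this (abs_nonneg _)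
    · refine Eventually.of_forall fun v _ t _ => ?_
      have := ((hF (t - v)).comp t ((hasDerivAt_id t).sub_const v)).mul_const (κ' v)
      simpa using this
  have total := (h1.sub h2).add hK
  refine total.congr_of_eventuallyEq (Eventually.of_forall fun t => ?_)
  exact parts t

/-- If the history/solution `x` has a corner at `0` (it agrees with `C¹` functions `x₋`
on `(-∞,0]` and `x₊` on `[0,∞)`), then the derivative of the delayed convolution has
one-sided derivatives at `t = τmin` whose jump is `k(τmin) · (x₊'(0) − x₋'(0))`;
in particular if `k(τmin) ≠ 0` and `x₊'(0) ≠ x₋'(0)` then `t = τmin` is a breaking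
point: the delayed convolution is not twice differentiable there. -/
theorem delayed_convolution_breaking_point
    (τmin τmax : ℝ) (h0 : 0 < τmin) (h1 : τmin < τmax)
    (k : ℝ → ℝ) (hk : ContDiff ℝ 2 k)
    (x xm xp : ℝ → ℝ) (hx : Continuous x)
    (hxm : ContDiff ℝ 1 xm) (hxp : ContDiff ℝ 1 xp)
    (heqm : ∀ s ≤ (0 : ℝ), x s = xm s) (heqp : ∀ s ≥ (0 : ℝ), x s = xp s) :
    ∃ L R : ℝ,
      HasDerivWithinAt (deriv (delayedConv τmin τmax x k)) L (Set.Iic τmin) τmin ∧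
      HasDerivWithinAt (deriv (delayedConv τmin τmax x k)) R (Set.Ici τmin) τmin ∧
      R - L = k τmin * (deriv xp 0 - deriv xm 0) ∧
      (k τmin ≠ 0 → deriv xp 0 ≠ deriv xm 0 →
        ¬ DifferentiableAt ℝ (deriv (delayedConv τmin τmax x k)) τmin) := by
  -- smoothness facts about k
  have hk2 : ContDiff ℝ (1 + 1) k := by
    have : ((1 : WithTop ℕ∞) + 1) = 2 := by norm_num
    rw [this]; exact hk
  have hk1 : ContDiff ℝ 1 (deriv k) := (contDiff_succ_iff_deriv.mp hk2).2.2
  have hkd : ∀ v, HasDerivAt k (deriv k v) v := fun v =>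
    ((contDiff_succ_iff_deriv.mp hk2).1 v).hasDerivAt
  have hk'c : Continuous (deriv k) := (contDiff_one_iff_deriv.mp hk1).1.continuous
  have hkd' : ∀ v, HasDerivAt (deriv k) (deriv (deriv k) v) v := fun v =>
    ((contDiff_one_iff_deriv.mp hk1).1 v).hasDerivAt
  have hk''c : Continuous (deriv (deriv k)) := (contDiff_one_iff_deriv.mp hk1).2
  -- change of variables: delayedConv = t ↦ ∫ v in τmin..τmax, x (t - v) * k v
  have hconv : delayedConv τmin τmax x k
      = fun t => ∫ v in τmin..τmax, x (t - v) * k v := by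
    funext t
    have h := intervalIntegral.integral_comp_sub_left
      (a := t - τmax) (b := t - τmin) (fun u => x (t - u) * k u) t
    simp only [sub_sub_cancel] at h
    simpa [delayedConv] using h
  -- the derivative function g
  set g : ℝ → ℝ := fun t =>
    x (t - τmin) * k τmin - x (t - τmax) * k τmax
      + ∫ v in τmin..τmax, x (t - v) * deriv k v with hg_def
  have hIg : ∀ t, HasDerivAt (delayedConv τmin τmax x k) (g t) t := by
    intro t
    have := lemA τmin τmax hx hkd hk'c t
    rw [hconv]
    exact this
  have hg : deriv (delayedConv τmin τmax x k) = g := funext fun t => (hIg t).deriv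
  -- one-sided derivatives of the first term
  have hxm0 : HasDerivAt xm (deriv xm 0) 0 :=
    ((hxm.differentiable one_ne_zero) 0).hasDerivAt
  have hxp0 : HasDerivAt xp (deriv xp 0) 0 :=
    ((hxp.differentiable one_ne_zero) 0).hasDerivAt
  have hinner : HasDerivAt (fun t : ℝ => t - τmin) 1 τmin := (hasDerivAt_id τmin).sub_const τmin
  have hAm : HasDerivAt (fun t => xm (t - τmin) * k τmin) (deriv xm 0 * k τmin) τmin := by
    have h0 : HasDerivAt xm (deriv xm 0) ((fun t : ℝ => t - τmin) τmin) := by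
      simpa using hxm0
    have := (HasDerivAt.comp (h := fun t : ℝ => t - τmin) (x := τmin) h0 hinner).mul_const (k τmin)
    simpa using this
  have hAp : HasDerivAt (fun t => xp (t - τmin) * k τmin) (deriv xp 0 * k τmin) τmin := by
    have h0 : HasDerivAt xp (deriv xp 0) ((fun t : ℝ => t - τmin) τmin) := by
      simpa using hxp0
    have := (HasDerivAt.comp (h := fun t : ℝ => t - τmin) (x := τmin) h0 hinner).mul_const (k τmin)
    simpa using this
  have hA_L : HasDerivWithinAt (fun t => x (t - τmin) * k τmin)
      (deriv xm 0 * k τmin) (Iic τmin) τmin := by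
    refine hAm.hasDerivWithinAt.congr (fun t ht => ?_) ?_
    · rw [heqm (t - τmin) (sub_nonpos.mpr ht)]
    · rw [heqm (τmin - τmin) (by simp)]
  have hA_R : HasDerivWithinAt (fun t => x (t - τmin) * k τmin)
      (deriv xp 0 * k τmin) (Ici τmin) τmin := by
    refine hAp.hasDerivWithinAt.congr (fun t ht => ?_) ?_
    · rw [heqp (t - τmin) (sub_nonneg.mpr ht)]
    · rw [heqp (τmin - τmin) (by simp)]
  -- second term is differentiable at τmin
  have hB : HasDerivAt (fun t => x (t - τmax) * k τmax)
      (deriv xm (τmin - τmax) * k τmax * 1) τmin := by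
    have h0 : HasDerivAt xm (deriv xm (τmin - τmax)) ((fun t : ℝ => t - τmax) τmin) :=
      ((hxm.differentiable one_ne_zero) _).hasDerivAt
    have hb : HasDerivAt (fun t => xm (t - τmax) * k τmax)
        (deriv xm (τmin - τmax) * k τmax * 1) τmin := by
      have := (h0.comp τmin ((hasDerivAt_id τmin).sub_const τmax)).mul_const (k τmax)
      simpa [mul_comm, mul_assoc] using this
    refine hb.congr_of_eventuallyEq ?_
    filter_upwards [Iio_mem_nhds h1] with t ht
    rw [heqm (t - τmax) (by have := Set.mem_Iio.mp ht; linarith)]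
  -- third term is differentiable at τmin
  have hJ := lemA (f := x) (κ := deriv k) (κ' := deriv (deriv k)) τmin τmax hx hkd' hk''c τmin
  set D := x (τmin - τmin) * deriv k τmin - x (τmin - τmax) * deriv k τmax
    + ∫ v in τmin..τmax, x (τmin - v) * deriv (deriv k) v with hD_def
  set L := deriv xm 0 * k τmin - deriv xm (τmin - τmax) * k τmax * 1 + D with hL_def
  set R := deriv xp 0 * k τmin - deriv xm (τmin - τmax) * k τmax * 1 + D with hR_def
  have hgL : HasDerivWithinAt g L (Iic τmin) τmin :=
    (hA_L.sub hB.hasDerivWithinAt).add hJ.hasDerivWithinAt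
  have hgR : HasDerivWithinAt g R (Ici τmin) τmin :=
    (hA_R.sub hB.hasDerivWithinAt).add hJ.hasDerivWithinAt
  refine ⟨L, R, ?_, ?_, ?_, ?_⟩
  · rw [hg]; exact hgL
  · rw [hg]; exact hgR
  · rw [hL_def, hR_def]; ring
  · intro hk0 hne hdiff
    rw [hg] at hdiff
    have hd : HasDerivAt g (deriv g τmin) τmin := hdiff.hasDerivAt
    have e1 : deriv g τmin = L :=
      (uniqueDiffOn_Iic τmin τmin Set.self_mem_Iic).eq_deriv _
        hd.hasDerivWithinAt hgL
    have e2 : deriv g τmin = R :=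
      (uniqueDiffOn_Ici τmin τmin Set.self_mem_Ici).eq_deriv _
        hd.hasDerivWithinAt hgR
    have : R - L = 0 := by rw [← e1, ← e2]; ring
    rw [hR_def, hL_def] at this
    have hΔ : k τmin * (deriv xp 0 - deriv xm 0) ≠ 0 :=
      mul_ne_zero hk0 (sub_ne_zero.mpr hne)
    apply hΔ
    linarith [this]
end

section
/- Let 0 < τ_min < τ_max be reals, let F : ℝ → ℝ → ℝ, let x : ℝ → ℝ be continuous, and let y : ℝ → ℝ be continuous on [0, ∞) with y(0) = (1/(τ_max − τ_min)) ∫_{−τ_max}^{−τ_min} x(s) ds. Suppose that for every t > 0: y is differentiable at t with derivative (x(t−τ_min) − x(t−τ_max))/(τ_max − τ_min), and x is differentiable at t with derivative F(x(t), y(t)). Then for every t ≥ 0, y(t) = (1/(τ_max − τ_min)) ∫_{t−τ_max}^{t−τ_min} x(s) ds, and consequently x satisfies the uniformly distributed delay differential equation x′(t) = F(x(t), (1/(τ_max − τ_min)) ∫_{t−τ_max}^{t−τ_min} x(s) ds) for every t > 0. -/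
open intervalIntegral Set Filter Topology

private lemma ftc_shift (x : ℝ → ℝ) (hx : Continuous x) (c t : ℝ) :
    HasDerivAt (fun u => ∫ s in (0:ℝ)..(u - c), x s) (x (t - c)) t := by
  have h1 : HasDerivAt (fun u : ℝ => ∫ s in (0:ℝ)..u, x s) (x (t - c)) (t - c) :=
    intervalIntegral.integral_hasDerivAt_right (hx.intervalIntegrable _ _)
      (hx.stronglyMeasurableAtFilter _ _) hx.continuousAt
  have h2 : HasDerivAt (fun u : ℝ => u - c) 1 t := (hasDerivAt_id t).sub_const c
  simpa [Function.comp_def] using h1.comp t h2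

/-- Converse direction of the equivalence between the uniformly distributed DDE and a
system of two discrete-delay DDEs: if `(x, y)` solves the two-discrete-delay system with
the matching initial condition for `y`, then `y` equals the uniform distributed delay
term and `x` solves the uniformly distributed DDE. -/
theorem discrete_system_to_uniform_distributed_DDE
    (τmin τmax : ℝ) (h0 : 0 < τmin) (h1 : τmin < τmax)
    (F : ℝ → ℝ → ℝ) (x y : ℝ → ℝ) (hx : Continuous x)
    (hycont : ContinuousOn y (Set.Ici 0))
    (hy0 : y 0 = (τmax - τmin)⁻¹ * ∫ s in (-τmax)..(-τmin), x s)
    (hyd : ∀ t > (0 : ℝ),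
      HasDerivAt y ((x (t - τmin) - x (t - τmax)) / (τmax - τmin)) t)
    (hxd : ∀ t > (0 : ℝ), HasDerivAt x (F (x t) (y t)) t) :
    (∀ t ≥ (0 : ℝ), y t = (τmax - τmin)⁻¹ * ∫ s in (t - τmax)..(t - τmin), x s) ∧
    (∀ t > (0 : ℝ),
      HasDerivAt x
        (F (x t) ((τmax - τmin)⁻¹ * ∫ s in (t - τmax)..(t - τmin), x s)) t) := by
  have hne : τmax - τmin ≠ 0 := sub_ne_zero.mpr h1.ne'
  set z : ℝ → ℝ := fun t => ∫ s in (t - τmax)..(t - τmin), x s with hzdef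
  have hzeq : ∀ t, z t = (∫ s in (0:ℝ)..(t - τmin), x s) - ∫ s in (0:ℝ)..(t - τmax), x s := by
    intro t
    rw [hzdef]
    exact (intervalIntegral.integral_interval_sub_left (hx.intervalIntegrable _ _)
      (hx.intervalIntegrable _ _)).symm
  have hzd : ∀ t, HasDerivAt z (x (t - τmin) - x (t - τmax)) t := by
    intro t
    have := (ftc_shift x hx τmin t).sub (ftc_shift x hx τmax t)
    exact this.congr_of_eventuallyEq (Filter.Eventually.of_forall fun u => (hzeq u))
  -- the difference function
  set g : ℝ → ℝ := fun t => y t - (τmax - τmin)⁻¹ * z t with hgdef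
  have hg0 : g 0 = 0 := by
    simp only [hgdef, hzdef]
    rw [hy0]
    norm_num
  have hgd : ∀ t > (0 : ℝ), HasDerivAt g 0 t := by
    intro t ht
    have := (hyd t ht).sub ((hzd t).const_mul ((τmax - τmin)⁻¹))
    rw [div_eq_inv_mul, sub_self] at this
    exact this
  have hzc : Continuous z := continuous_iff_continuousAt.mpr fun t => (hzd t).continuousAt
  have hgcont : ContinuousOn g (Set.Ici 0) :=
    hycont.sub ((continuous_const.mul hzc).continuousOn)
  -- g is constant on (0, ∞)
  have hconst : ∀ a > (0:ℝ), ∀ b, a ≤ b → g b = g a := by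
    intro a ha b hab
    have hc : ContinuousOn g (Set.Icc a b) := fun u hu =>
      ((hgd u (lt_of_lt_of_le ha hu.1)).continuousAt).continuousWithinAt
    have hd : ∀ u ∈ Set.Ico a b, HasDerivWithinAt g 0 (Set.Ici u) u := fun u hu =>
      (hgd u (lt_of_lt_of_le ha hu.1)).hasDerivWithinAt
    exact constant_of_has_deriv_right_zero hc hd b (Set.right_mem_Icc.mpr hab)
  -- hence g t = g 0 for all t ≥ 0
  have hgzero : ∀ t ≥ (0:ℝ), g t = 0 := by
    intro t ht
    rcases eq_or_lt_of_le ht with h | h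
    · rw [← h]; exact hg0
    · have hlim : Filter.Tendsto g (nhdsWithin 0 (Set.Ioi 0)) (nhds (g 0)) :=
        ((hgcont 0 Set.self_mem_Ici).tendsto).mono_left
          (nhdsWithin_mono _ Set.Ioi_subset_Ici_self)
      have heq : ∀ᶠ s in nhdsWithin (0:ℝ) (Set.Ioi 0), g s = g t := by
        filter_upwards [Ioc_mem_nhdsGT_of_mem (Set.left_mem_Ico.mpr h)] with s hs
        rw [hconst s hs.1 t hs.2]
      have hlim2 : Filter.Tendsto g (nhdsWithin 0 (Set.Ioi 0)) (nhds (g t)) :=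
        Filter.Tendsto.congr' (heq.mono fun s hs => hs.symm) tendsto_const_nhds
      rw [← hg0]
      exact (tendsto_nhds_unique hlim2 hlim)
  have hyz : ∀ t ≥ (0:ℝ), y t = (τmax - τmin)⁻¹ * z t := by
    intro t ht
    have := hgzero t ht
    simp only [hgdef] at this
    linarith
  refine ⟨hyz, fun t ht => ?_⟩
  have := hxd t ht
  rwa [hyz t ht.le] at this
end

section
/- Let 0 < τ_min < τ_max be reals and let x : ℝ → ℝ be continuous. For each natural number i define A_i(t) = ∫_{t−τ_max}^{t−τ_min} x(u) (t−u)^i du. Then for every t ∈ ℝ: A_0 is differentiable at t with derivative x(t−τ_min) − x(t−τ_max), and for every i ≥ 1, A_i is differentiable at t with derivative x(t−τ_min) τ_min^i − x(t−τ_max) τ_max^i + i · A_{i−1}(t). -/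
/-- Differentiation recursion for the distributed delay terms with monomial kernels
`A_i(t) = ∫_{t-τmax}^{t-τmin} x(u) (t-u)^i du`. -/
theorem monomial_delay_terms_hasDerivAt
    (τmin τmax : ℝ) (h0 : 0 < τmin) (h1 : τmin < τmax)
    (x : ℝ → ℝ) (hx : Continuous x) (A : ℕ → ℝ → ℝ)
    (hA : ∀ i t, A i t = ∫ u in (t - τmax)..(t - τmin), x u * (t - u) ^ i) :
    ∀ t : ℝ,
      HasDerivAt (A 0) (x (t - τmin) - x (t - τmax)) t ∧
      ∀ i : ℕ, 1 ≤ i →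
        HasDerivAt (A i)
          (x (t - τmin) * τmin ^ i - x (t - τmax) * τmax ^ i + i * A (i - 1) t) t := by
  classical
  intro t
  -- continuity of the kernels
  have hgc : ∀ j : ℕ, Continuous (fun u : ℝ => x u * (-u) ^ j) := by
    intro j
    exact hx.mul (continuous_neg.pow j)
  -- the auxiliary integrals with moving limits
  set G : ℕ → ℝ → ℝ := fun j r => ∫ u in (r - τmax)..(r - τmin), x u * (-u) ^ j with hGdef
  -- derivative of each G j
  have hGderiv : ∀ (j : ℕ) (s : ℝ),
      HasDerivAt (G j)
        (x (s - τmin) * (-(s - τmin)) ^ j - x (s - τmax) * (-(s - τmax)) ^ j) s := by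
    intro j s
    have hF : ∀ b : ℝ, HasDerivAt (fun r : ℝ => ∫ u in (0:ℝ)..r, x u * (-u) ^ j)
        (x b * (-b) ^ j) b := fun b => ((hgc j).integral_hasStrictDerivAt 0 b).hasDerivAt
    have h1 : HasDerivAt (fun r : ℝ => ∫ u in (0:ℝ)..(r - τmin), x u * (-u) ^ j)
        (x (s - τmin) * (-(s - τmin)) ^ j) s := by
      have := (hF (s - τmin)).comp s ((hasDerivAt_id s).sub_const τmin)
      simpa [Function.comp_def] using this
    have h2 : HasDerivAt (fun r : ℝ => ∫ u in (0:ℝ)..(r - τmax), x u * (-u) ^ j)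
        (x (s - τmax) * (-(s - τmax)) ^ j) s := by
      have := (hF (s - τmax)).comp s ((hasDerivAt_id s).sub_const τmax)
      simpa [Function.comp_def] using this
    have heq : G j = fun r : ℝ =>
        (∫ u in (0:ℝ)..(r - τmin), x u * (-u) ^ j)
          - ∫ u in (0:ℝ)..(r - τmax), x u * (-u) ^ j := by
      funext r
      rw [hGdef]
      rw [intervalIntegral.integral_interval_sub_left
        ((hgc j).intervalIntegrable _ _) ((hgc j).intervalIntegrable _ _)]
    rw [heq]
    exact h1.sub h2
  -- the binomial expansion of A n
  have hAeq : ∀ n : ℕ, A n = fun r : ℝ =>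
      ∑ k ∈ Finset.range (n + 1), ((n.choose k : ℝ) * r ^ k) * G (n - k) r := by
    intro n
    funext r
    rw [hA]
    have hpt : ∀ u : ℝ, x u * (r - u) ^ n =
        ∑ k ∈ Finset.range (n + 1),
          ((n.choose k : ℝ) * r ^ k) * (x u * (-u) ^ (n - k)) := by
      intro u
      rw [sub_eq_add_neg, add_pow, Finset.mul_sum]
      exact Finset.sum_congr rfl fun k _ => by ring
    simp_rw [hpt]
    rw [intervalIntegral.integral_finset_sum]
    · exact Finset.sum_congr rfl fun k _ => intervalIntegral.integral_const_mul _ _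
    · intro k _
      exact (continuous_const.mul (hgc (n - k))).intervalIntegrable _ _
  -- derivative of the expanded sum
  have hsum : ∀ n : ℕ,
      HasDerivAt (fun r : ℝ =>
          ∑ k ∈ Finset.range (n + 1), ((n.choose k : ℝ) * r ^ k) * G (n - k) r)
        (∑ k ∈ Finset.range (n + 1),
          (((n.choose k : ℝ) * ((k : ℝ) * t ^ (k - 1))) * G (n - k) t +
            ((n.choose k : ℝ) * t ^ k) *
              (x (t - τmin) * (-(t - τmin)) ^ (n - k)
                - x (t - τmax) * (-(t - τmax)) ^ (n - k)))) t := by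
    intro n
    refine HasDerivAt.fun_sum fun k _ => ?_
    exact ((hasDerivAt_pow k t).const_mul ((n.choose k : ℝ))).mul (hGderiv (n - k) t)
  -- the binomial collapse of the boundary terms
  have key : ∀ (n : ℕ) (c : ℝ),
      ∑ k ∈ Finset.range (n + 1),
        ((n.choose k : ℝ) * t ^ k) * (-(t - c)) ^ (n - k) = c ^ n := by
    intro n c
    calc ∑ k ∈ Finset.range (n + 1), ((n.choose k : ℝ) * t ^ k) * (-(t - c)) ^ (n - k)
        = ∑ k ∈ Finset.range (n + 1), t ^ k * (-(t - c)) ^ (n - k) * (n.choose k : ℝ) :=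
          Finset.sum_congr rfl fun k _ => by ring
      _ = (t + -(t - c)) ^ n := (add_pow t (-(t - c)) n).symm
      _ = c ^ n := by ring_nf
  constructor
  · -- the case i = 0
    have hA0 : A 0 = G 0 := by
      funext r
      rw [hA, hGdef]
      simp
    rw [hA0]
    simpa using hGderiv 0 t
  · -- the case i ≥ 1
    intro i hi
    obtain ⟨m, rfl⟩ : ∃ m, i = m + 1 := ⟨i - 1, (Nat.succ_pred_eq_of_pos hi).symm⟩
    rw [hAeq (m + 1)]
    have h := hsum (m + 1)
    convert h using 1
    rw [Finset.sum_add_distrib]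
    have hb : ∑ k ∈ Finset.range (m + 1 + 1),
        (((m + 1).choose k : ℝ) * t ^ k) *
          (x (t - τmin) * (-(t - τmin)) ^ (m + 1 - k)
            - x (t - τmax) * (-(t - τmax)) ^ (m + 1 - k)) =
        x (t - τmin) * τmin ^ (m + 1) - x (t - τmax) * τmax ^ (m + 1) := by
      have e1 := key (m + 1) τmin
      have e2 := key (m + 1) τmax
      calc ∑ k ∈ Finset.range (m + 1 + 1),
            (((m + 1).choose k : ℝ) * t ^ k) *
              (x (t - τmin) * (-(t - τmin)) ^ (m + 1 - k)
                - x (t - τmax) * (-(t - τmax)) ^ (m + 1 - k))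
          = x (t - τmin) * (∑ k ∈ Finset.range (m + 1 + 1),
              (((m + 1).choose k : ℝ) * t ^ k) * (-(t - τmin)) ^ (m + 1 - k))
            - x (t - τmax) * (∑ k ∈ Finset.range (m + 1 + 1),
              (((m + 1).choose k : ℝ) * t ^ k) * (-(t - τmax)) ^ (m + 1 - k)) := by
            rw [Finset.mul_sum, Finset.mul_sum, ← Finset.sum_sub_distrib]
            exact Finset.sum_congr rfl fun k _ => by ring
        _ = x (t - τmin) * τmin ^ (m + 1) - x (t - τmax) * τmax ^ (m + 1) := by
            rw [e1, e2]
    have ha : ∑ k ∈ Finset.range (m + 1 + 1),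
        (((m + 1).choose k : ℝ) * ((k : ℝ) * t ^ (k - 1))) * G (m + 1 - k) t =
        ((m : ℝ) + 1) * A m t := by
      rw [Finset.sum_range_succ']
      simp only [Nat.cast_zero, zero_mul, mul_zero, add_zero]
      simp only [hAeq m, Finset.mul_sum]
      refine Finset.sum_congr rfl fun k _ => ?_
      have hn : (m + 1) * m.choose k = (m + 1).choose (k + 1) * (k + 1) :=
        Nat.add_one_mul_choose_eq m k
      have hnr : ((m : ℝ) + 1) * (m.choose k : ℝ) =
          ((m + 1).choose (k + 1) : ℝ) * ((k : ℝ) + 1) := by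
        exact_mod_cast congrArg (Nat.cast (R := ℝ)) hn
      have hsub : m + 1 - (k + 1) = m - k := by omega
      rw [hsub]
      simp only [Nat.add_sub_cancel]
      push_cast
      linear_combination (-(t ^ k * G (m - k) t)) * hnr
    rw [ha, hb]
    simp only [Nat.add_sub_cancel]
    push_cast
    ring
end

section
/- Let 0 < τ_min < τ_max be reals, let n be a natural number, let a_0, …, a_n be reals, let F : ℝ → ℝ → ℝ, and let x : ℝ → ℝ be continuous. For each i ≤ n define y_i(t) = ∫_{t−τ_max}^{t−τ_min} x(u) (t−u)^i du. Suppose that for every t > 0, x is differentiable at t with derivative F(x(t), Σ_{i=0}^{n} a_i y_i(t)). Then for every t > 0 the tuple (x, y_0, …, y_n) satisfies: x′(t) = F(x(t), Σ_{i=0}^{n} a_i y_i(t)); y_0′(t) = x(t−τ_min) − x(t−τ_max); y_i′(t) = x(t−τ_min) τ_min^i − x(t−τ_max) τ_max^i + i · y_{i−1}(t) for 1 ≤ i ≤ n; and y_i(0) = ∫_{τ_min}^{τ_max} x(−s) s^i ds for each i ≤ n. -/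
open Finset intervalIntegral MeasureTheory

/-- Iterated moment antiderivative: `∫₀ᵛ x(u) uʲ du`. -/
private noncomputable def Gx (x : ℝ → ℝ) (j : ℕ) (v : ℝ) : ℝ := ∫ u in (0:ℝ)..v, x u * u ^ j

private lemma Gx_hasDerivAt (x : ℝ → ℝ) (hx : Continuous x) (j : ℕ) (v : ℝ) :
    HasDerivAt (Gx x j) (x v * v ^ j) v :=
  ((hx.mul (continuous_pow j)).integral_hasStrictDerivAt 0 v).hasDerivAt

private lemma Gx_int (x : ℝ → ℝ) (hx : Continuous x) (j : ℕ) (A B : ℝ) :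
    (∫ u in A..B, x u * u ^ j) = Gx x j B - Gx x j A := by
  have h := intervalIntegral.integral_interval_sub_left (μ := MeasureTheory.volume)
    (f := fun u => x u * u ^ j)
    ((hx.mul (continuous_pow j)).intervalIntegrable 0 B)
    ((hx.mul (continuous_pow j)).intervalIntegrable 0 A)
  exact h.symm

private lemma y_expand (x : ℝ → ℝ) (hx : Continuous x) (i : ℕ) (A B t : ℝ) :
    (∫ u in A..B, x u * (t - u) ^ i)
      = ∑ k ∈ range (i+1),
          ((-1:ℝ)^(k+i) * (i.choose k : ℝ) * t^k) * (Gx x (i-k) B - Gx x (i-k) A) := by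
  have h1 : ∀ u : ℝ, x u * (t - u) ^ i
      = ∑ k ∈ range (i+1), ((-1:ℝ)^(k+i) * (i.choose k : ℝ) * t^k) * (x u * u ^ (i-k)) := by
    intro u
    rw [sub_pow, Finset.mul_sum]
    exact Finset.sum_congr rfl fun k _ => by ring
  rw [intervalIntegral.integral_congr (g := fun u => ∑ k ∈ range (i+1),
      ((-1:ℝ)^(k+i) * (i.choose k : ℝ) * t^k) * (x u * u ^ (i-k))) (fun u _ => h1 u)]
  rw [intervalIntegral.integral_finset_sum (f := fun k u =>
      ((-1:ℝ)^(k+i) * (i.choose k : ℝ) * t^k) * (x u * u ^ (i-k))) (fun k _ =>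
      ((hx.mul (continuous_pow (i-k))).intervalIntegrable A B).const_mul _)]
  exact Finset.sum_congr rfl fun k _ => by
    rw [intervalIntegral.integral_const_mul, Gx_int x hx]

private lemma binom_boundary (i : ℕ) (t τ : ℝ) :
    ∑ k ∈ range (i+1), ((-1:ℝ)^(k+i) * (i.choose k : ℝ) * t^k) * (t - τ)^(i-k) = τ^i := by
  have h : (τ:ℝ)^i = (t - (t - τ))^i := by ring_nf
  rw [h, sub_pow]
  exact Finset.sum_congr rfl fun k _ => by ring

private lemma y_hasDeriv (τmin τmax : ℝ) (x : ℝ → ℝ) (hx : Continuous x)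
    (y : ℕ → ℝ → ℝ)
    (hy : ∀ i t, y i t = ∫ u in (t - τmax)..(t - τmin), x u * (t - u) ^ i)
    (i : ℕ) (t : ℝ) :
    HasDerivAt (y i)
      (x (t - τmin) * τmin ^ i - x (t - τmax) * τmax ^ i + i * y (i - 1) t) t := by
  have hyfun : y i = fun t => ∑ k ∈ range (i+1),
      ((-1:ℝ)^(k+i) * (i.choose k : ℝ) * t^k)
        * (Gx x (i-k) (t - τmin) - Gx x (i-k) (t - τmax)) :=
    funext fun t => (hy i t).trans (y_expand x hx i _ _ t)
  rw [hyfun]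
  set c : ℕ → ℝ := fun k => (-1:ℝ)^(k+i) * (i.choose k : ℝ) with hc
  have hG : ∀ (j : ℕ) (τ : ℝ), HasDerivAt (fun t => Gx x j (t - τ)) (x (t - τ) * (t - τ)^j) t := by
    intro j τ
    have := (Gx_hasDerivAt x hx j (t - τ)).comp t ((hasDerivAt_id t).sub_const τ)
    simpa [Function.comp_def] using this
  have hterm : ∀ k ∈ range (i+1), HasDerivAt
      (fun t => (c k * t^k) * (Gx x (i-k) (t - τmin) - Gx x (i-k) (t - τmax)))
      (c k * (↑k * t^(k-1)) * (Gx x (i-k) (t - τmin) - Gx x (i-k) (t - τmax))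
        + (c k * t^k) * (x (t - τmin) * (t - τmin)^(i-k) - x (t - τmax) * (t - τmax)^(i-k))) t := by
    intro k _
    exact ((hasDerivAt_pow k t).const_mul (c k)).mul ((hG (i-k) τmin).sub (hG (i-k) τmax))
  have hsum := HasDerivAt.fun_sum hterm
  refine hsum.congr_deriv ?_
  rw [Finset.sum_add_distrib]
  have hS2 : ∑ k ∈ range (i+1), (c k * t^k)
      * (x (t - τmin) * (t - τmin)^(i-k) - x (t - τmax) * (t - τmax)^(i-k))
      = x (t - τmin) * τmin ^ i - x (t - τmax) * τmax ^ i := by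
    have e1 : ∑ k ∈ range (i+1), (c k * t^k)
        * (x (t - τmin) * (t - τmin)^(i-k) - x (t - τmax) * (t - τmax)^(i-k))
        = x (t - τmin) * (∑ k ∈ range (i+1), (c k * t^k) * (t - τmin)^(i-k))
          - x (t - τmax) * (∑ k ∈ range (i+1), (c k * t^k) * (t - τmax)^(i-k)) := by
      rw [Finset.mul_sum, Finset.mul_sum, ← Finset.sum_sub_distrib]
      exact Finset.sum_congr rfl fun k _ => by ring
    rw [e1, binom_boundary, binom_boundary]
  have hS1 : ∑ k ∈ range (i+1), c k * (↑k * t^(k-1))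
      * (Gx x (i-k) (t - τmin) - Gx x (i-k) (t - τmax)) = ↑i * y (i-1) t := by
    cases i with
    | zero => simp
    | succ m =>
      rw [Finset.sum_range_succ']
      simp only [Nat.cast_zero, zero_mul, mul_zero, zero_mul, add_zero]
      have hym : y (m + 1 - 1) t = ∑ k ∈ range (m+1),
          ((-1:ℝ)^(k+m) * (m.choose k : ℝ) * t^k)
            * (Gx x (m-k) (t - τmin) - Gx x (m-k) (t - τmax)) := by
        simpa using (hy m t).trans (y_expand x hx m _ _ t)
      rw [hym, Finset.mul_sum]
      refine Finset.sum_congr rfl fun k hk => ?_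
      have hch : ((m+1).choose (k+1) : ℝ) * (k+1) = (m+1) * (m.choose k : ℝ) := by
        exact_mod_cast (Nat.add_one_mul_choose_eq m k).symm
      have hidx : m + 1 - (k + 1) = m - k := by omega
      have hsgn : ((-1:ℝ))^(k + 1 + (m + 1)) = (-1:ℝ)^(k + m) := by
        rw [show k + 1 + (m + 1) = (k + m) + 2 by omega, pow_add]
        norm_num
      rw [hc]
      simp only [hidx, Nat.add_sub_cancel, hsgn]
      push_cast
      linear_combination ((-1:ℝ)^(k+m) * t^k *
        (Gx x (m-k) (t - τmin) - Gx x (m-k) (t - τmax))) * hch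
  rw [hS1, hS2]
  ring

open Finset in
/-- Forward direction of the equivalence between the polynomial-kernel distributed DDE
and a system of discrete-delay DDEs: if `x` solves the distributed DDE written via the
moment integrals `y_i`, then `(x, y_0, …, y_n)` solves the discrete-delay system with the
stated initial values. -/
theorem polynomial_distributed_DDE_to_discrete_system
    (τmin τmax : ℝ) (h0 : 0 < τmin) (h1 : τmin < τmax)
    (n : ℕ) (a : ℕ → ℝ) (F : ℝ → ℝ → ℝ)
    (x : ℝ → ℝ) (hx : Continuous x) (y : ℕ → ℝ → ℝ)
    (hy : ∀ i t, y i t = ∫ u in (t - τmax)..(t - τmin), x u * (t - u) ^ i)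
    (hxd : ∀ t > (0 : ℝ),
      HasDerivAt x (F (x t) (∑ i ∈ range (n + 1), a i * y i t)) t) :
    (∀ t > (0 : ℝ),
      HasDerivAt x (F (x t) (∑ i ∈ range (n + 1), a i * y i t)) t ∧
      HasDerivAt (y 0) (x (t - τmin) - x (t - τmax)) t ∧
      ∀ i : ℕ, 1 ≤ i → i ≤ n →
        HasDerivAt (y i)
          (x (t - τmin) * τmin ^ i - x (t - τmax) * τmax ^ i + i * y (i - 1) t) t) ∧
    (∀ i ≤ n, y i 0 = ∫ s in τmin..τmax, x (-s) * s ^ i) := by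
  constructor
  · intro t ht
    refine ⟨hxd t ht, ?_, fun i _ _ => y_hasDeriv τmin τmax x hx y hy i t⟩
    have h := y_hasDeriv τmin τmax x hx y hy 0 t
    simpa using h
  · intro i _
    rw [hy i 0]
    have h : ∀ u : ℝ, x u * (0 - u) ^ i = (fun s => x (-s) * s ^ i) (-u) := by
      intro u; simp [zero_sub]
    rw [intervalIntegral.integral_congr (g := fun u => (fun s => x (-s) * s ^ i) (-u))
      (fun u _ => h u)]
    simp only [zero_sub]
    rw [intervalIntegral.integral_comp_neg (fun s => x (-s) * s ^ i)]
    norm_num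
end

section
/- Let 0 < τ_min < τ_max be reals, let n be a natural number, let a_0, …, a_n be reals, let F : ℝ → ℝ → ℝ, let x : ℝ → ℝ be continuous, and let y_0, …, y_n : ℝ → ℝ be continuous on [0, ∞) with y_i(0) = ∫_{τ_min}^{τ_max} x(−s) s^i ds for each i ≤ n. Suppose that for every t > 0: y_0 is differentiable at t with derivative x(t−τ_min) − x(t−τ_max); for 1 ≤ i ≤ n, y_i is differentiable at t with derivative x(t−τ_min) τ_min^i − x(t−τ_max) τ_max^i + i · y_{i−1}(t); and x is differentiable at t with derivative F(x(t), Σ_{i=0}^{n} a_i y_i(t)). Then for every t ≥ 0 and every i ≤ n, y_i(t) = ∫_{τ_min}^{τ_max} x(t−s) s^i ds, and consequently x satisfies the distributed delay differential equation x′(t) = F(x(t), ∫_{τ_min}^{τ_max} x(t−s) k_poly(s) ds) for every t > 0, where k_poly(s) = Σ_{i=0}^{n} a_i s^i. -/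
open intervalIntegral Finset

noncomputable def Gk (x : ℝ → ℝ) (p q : ℝ) (k : ℕ) (t : ℝ) : ℝ :=
  ∫ u in (t - q)..(t - p), x u * u ^ k

lemma Gk_hasDerivAt {x : ℝ → ℝ} (hx : Continuous x) (p q : ℝ) (k : ℕ) (t : ℝ) :
    HasDerivAt (Gk x p q k)
      (x (t - p) * (t - p) ^ k - x (t - q) * (t - q) ^ k) t := by
  set f : ℝ → ℝ := fun u => x u * u ^ k with hf
  have hfc : Continuous f := hx.mul (continuous_pow k)
  have hH : ∀ v : ℝ, HasDerivAt (fun v => ∫ u in (0:ℝ)..v, f u) (f v) v := by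
    intro v
    exact integral_hasDerivAt_right (hfc.intervalIntegrable _ _)
      (hfc.stronglyMeasurableAtFilter _ _) hfc.continuousAt
  have h1 : HasDerivAt (fun t => (∫ u in (0:ℝ)..(t - p), f u) - ∫ u in (0:ℝ)..(t - q), f u)
      (f (t - p) * 1 - f (t - q) * 1) t := by
    exact ((hH (t - p)).comp t ((hasDerivAt_id t).sub_const p)).sub
      ((hH (t - q)).comp t ((hasDerivAt_id t).sub_const q))
  have h2 : (fun t => (∫ u in (0:ℝ)..(t - p), f u) - ∫ u in (0:ℝ)..(t - q), f u) = Gk x p q k := by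
    funext s
    exact integral_interval_sub_left (hfc.intervalIntegrable _ _) (hfc.intervalIntegrable _ _)
  rw [h2] at h1
  simpa using h1

lemma Zk_eq {x : ℝ → ℝ} (hx : Continuous x) (p q : ℝ) (i : ℕ) (t : ℝ) :
    (∫ s in p..q, x (t - s) * s ^ i)
      = ∑ m ∈ range (i + 1), ((-1 : ℝ) ^ (m + i) * (i.choose m : ℝ) * t ^ m) * Gk x p q (i - m) t := by
  have h1 : (∫ s in p..q, x (t - s) * s ^ i)
      = ∫ u in (t - q)..(t - p), x u * (t - u) ^ i := by
    rw [← intervalIntegral.integral_comp_sub_left (fun u => x u * (t - u) ^ i) t]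
    simp [sub_sub_cancel]
  rw [h1]
  have h2 : ∀ u : ℝ, x u * (t - u) ^ i
      = ∑ m ∈ range (i + 1), ((-1 : ℝ) ^ (m + i) * (i.choose m : ℝ) * t ^ m) * (x u * u ^ (i - m)) := by
    intro u
    rw [sub_pow, Finset.mul_sum]
    exact Finset.sum_congr rfl fun m _ => by ring
  simp_rw [h2]
  rw [intervalIntegral.integral_finset_sum]
  · exact Finset.sum_congr rfl fun m _ => by
      rw [intervalIntegral.integral_const_mul]; rfl
  · intro m _
    exact (continuous_const.mul (hx.mul (continuous_pow _))).intervalIntegrable _ _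
lemma Z_hasDerivAt_gen {x : ℝ → ℝ} (hx : Continuous x) (p q : ℝ) (i : ℕ) (t : ℝ) :
    HasDerivAt (fun t => ∫ s in p..q, x (t - s) * s ^ i)
      ((∑ m ∈ range (i + 1),
          ((-1 : ℝ) ^ (m + i) * (i.choose m : ℝ) * (↑m * t ^ (m - 1))) * Gk x p q (i - m) t)
        + (x (t - p) * p ^ i - x (t - q) * q ^ i)) t := by
  have hfun : (fun t => ∫ s in p..q, x (t - s) * s ^ i)
      = fun t => ∑ m ∈ range (i + 1),
          ((-1 : ℝ) ^ (m + i) * (i.choose m : ℝ) * t ^ m) * Gk x p q (i - m) t :=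
    funext (Zk_eq hx p q i)
  rw [hfun]
  have H := HasDerivAt.fun_sum (u := range (i + 1))
    (A := fun m t => ((-1 : ℝ) ^ (m + i) * (i.choose m : ℝ) * t ^ m) * Gk x p q (i - m) t)
    (A' := fun m => ((-1 : ℝ) ^ (m + i) * (i.choose m : ℝ) * (↑m * t ^ (m - 1))) * Gk x p q (i - m) t
      + ((-1 : ℝ) ^ (m + i) * (i.choose m : ℝ) * t ^ m)
        * (x (t - p) * (t - p) ^ (i - m) - x (t - q) * (t - q) ^ (i - m)))
    (fun m _ => ((hasDerivAt_pow m t).const_mul ((-1 : ℝ) ^ (m + i) * (i.choose m : ℝ))).mul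
      (Gk_hasDerivAt hx p q (i - m) t))
  have hB : ∑ m ∈ range (i + 1),
      ((-1 : ℝ) ^ (m + i) * (i.choose m : ℝ) * t ^ m)
        * (x (t - p) * (t - p) ^ (i - m) - x (t - q) * (t - q) ^ (i - m))
      = x (t - p) * p ^ i - x (t - q) * q ^ i := by
    have hp : (p : ℝ) ^ i
        = ∑ m ∈ range (i + 1), (-1 : ℝ) ^ (m + i) * t ^ m * (t - p) ^ (i - m) * (i.choose m) := by
      have := sub_pow t (t - p) i; rwa [sub_sub_cancel] at this
    have hq : (q : ℝ) ^ i
        = ∑ m ∈ range (i + 1), (-1 : ℝ) ^ (m + i) * t ^ m * (t - q) ^ (i - m) * (i.choose m) := by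
      have := sub_pow t (t - q) i; rwa [sub_sub_cancel] at this
    rw [hp, hq, Finset.mul_sum, Finset.mul_sum, ← Finset.sum_sub_distrib]
    exact Finset.sum_congr rfl fun m _ => by ring
  rw [Finset.sum_add_distrib, hB] at H
  exact H

lemma Z_hasDerivAt_zero {x : ℝ → ℝ} (hx : Continuous x) (p q : ℝ) (t : ℝ) :
    HasDerivAt (fun t => ∫ s in p..q, x (t - s) * s ^ (0:ℕ))
      (x (t - p) - x (t - q)) t := by
  have := Z_hasDerivAt_gen hx p q 0 t
  simpa using this

lemma Z_hasDerivAt_succ {x : ℝ → ℝ} (hx : Continuous x) (p q : ℝ) (j : ℕ) (t : ℝ) :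
    HasDerivAt (fun t => ∫ s in p..q, x (t - s) * s ^ (j + 1))
      (x (t - p) * p ^ (j + 1) - x (t - q) * q ^ (j + 1)
        + (↑(j + 1)) * ∫ s in p..q, x (t - s) * s ^ j) t := by
  have H := Z_hasDerivAt_gen hx p q (j + 1) t
  have hS : (∑ m ∈ range (j + 1 + 1),
      ((-1 : ℝ) ^ (m + (j + 1)) * ((j + 1).choose m : ℝ) * (↑m * t ^ (m - 1)))
        * Gk x p q (j + 1 - m) t)
      = (↑(j + 1) : ℝ) * ∫ s in p..q, x (t - s) * s ^ j := by
    rw [Finset.sum_range_succ']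
    simp only [Nat.cast_zero, zero_mul, mul_zero, zero_add, add_zero]
    rw [Zk_eq hx p q j t, Finset.mul_sum]
    refine Finset.sum_congr rfl fun k hk => ?_
    have hidx : j + 1 - (k + 1) = j - k := by omega
    have hc : ((j : ℝ) + 1) * (j.choose k : ℝ) = ((j + 1).choose (k + 1) : ℝ) * ((k : ℝ) + 1) := by
      exact_mod_cast Nat.add_one_mul_choose_eq j k
    have hsgn : (-1 : ℝ) ^ (k + 1 + (j + 1)) = (-1 : ℝ) ^ (k + j) := by
      have h : k + 1 + (j + 1) = (k + j) + 2 := by omega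
      rw [h, pow_add]; norm_num
    rw [hidx, hsgn]
    push_cast
    linear_combination (-(-1 : ℝ) ^ (k + j) * t ^ k * Gk x p q (j - k) t) * hc
  rw [hS] at H
  have he : (↑(j + 1) : ℝ) * (∫ s in p..q, x (t - s) * s ^ j)
      + (x (t - p) * p ^ (j + 1) - x (t - q) * q ^ (j + 1))
      = x (t - p) * p ^ (j + 1) - x (t - q) * q ^ (j + 1)
        + (↑(j + 1) : ℝ) * ∫ s in p..q, x (t - s) * s ^ j := by ring
  rw [he] at H
  exact H


open Finset in
/-- Converse direction of the equivalence between the polynomial-kernel distributed DDE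
and a system of discrete-delay DDEs: the auxiliary variables `y_i` with matching initial
conditions necessarily equal the moment integrals `∫_{τmin}^{τmax} x(t-s) sⁱ ds`, and
consequently `x` solves the polynomial-kernel distributed DDE. -/
theorem discrete_system_to_polynomial_distributed_DDE
    (τmin τmax : ℝ) (h0 : 0 < τmin) (h1 : τmin < τmax)
    (n : ℕ) (a : ℕ → ℝ) (F : ℝ → ℝ → ℝ)
    (x : ℝ → ℝ) (hx : Continuous x) (y : ℕ → ℝ → ℝ)
    (hycont : ∀ i ≤ n, ContinuousOn (y i) (Set.Ici 0))
    (hy0 : ∀ i ≤ n, y i 0 = ∫ s in τmin..τmax, x (-s) * s ^ i)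
    (hy0d : ∀ t > (0 : ℝ), HasDerivAt (y 0) (x (t - τmin) - x (t - τmax)) t)
    (hyid : ∀ i : ℕ, 1 ≤ i → i ≤ n → ∀ t > (0 : ℝ),
      HasDerivAt (y i)
        (x (t - τmin) * τmin ^ i - x (t - τmax) * τmax ^ i + i * y (i - 1) t) t)
    (hxd : ∀ t > (0 : ℝ),
      HasDerivAt x (F (x t) (∑ i ∈ range (n + 1), a i * y i t)) t) :
    (∀ t ≥ (0 : ℝ), ∀ i ≤ n, y i t = ∫ s in τmin..τmax, x (t - s) * s ^ i) ∧
    (∀ t > (0 : ℝ),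
      HasDerivAt x
        (F (x t)
          (∫ s in τmin..τmax, x (t - s) * ∑ i ∈ range (n + 1), a i * s ^ i)) t) := by
  set Z : ℕ → ℝ → ℝ := fun i t => ∫ s in τmin..τmax, x (t - s) * s ^ i with hZ
  have hZcont : ∀ i, Continuous (Z i) := fun i =>
    Differentiable.continuous fun t => (Z_hasDerivAt_gen hx τmin τmax i t).differentiableAt
  have hZ0 : ∀ i : ℕ, Z i 0 = ∫ s in τmin..τmax, x (-s) * s ^ i := by
    intro i; simp only [hZ, zero_sub]
  have main : ∀ i ≤ n, (∀ s > (0:ℝ), HasDerivAt (fun r => y i r - Z i r) 0 s) →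
      ∀ t ≥ (0:ℝ), y i t = Z i t := by
    intro i hin hder t ht
    set h : ℝ → ℝ := fun r => y i r - Z i r with hh
    have hcont : ContinuousOn h (Set.Ici 0) := (hycont i hin).sub (hZcont i).continuousOn
    have h0 : h 0 = 0 := by
      simp only [hh, hy0 i hin, hZ0 i, sub_self]
    rcases eq_or_lt_of_le ht with h' | h'
    · subst h'
      exact sub_eq_zero.mp h0
    · have hconst : ∀ r ∈ Set.Ioc (0:ℝ) t, h r = h t := by
        intro r hr
        have hsub : Set.Icc r t ⊆ Set.Ici (0:ℝ) := fun s hs => le_trans hr.1.le hs.1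
        have := constant_of_has_deriv_right_zero (f := h) (a := r) (b := t)
          (hcont.mono hsub)
          (fun s hs => (hder s (lt_of_lt_of_le hr.1 hs.1)).hasDerivWithinAt)
          t (Set.right_mem_Icc.mpr hr.2)
        exact this.symm
      have hne : (nhdsWithin (0:ℝ) (Set.Ioc 0 t)).NeBot := by
        apply mem_closure_iff_nhdsWithin_neBot.mp
        rw [closure_Ioc h'.ne]
        exact Set.left_mem_Icc.mpr h'.le
      have l1 : Filter.Tendsto h (nhdsWithin 0 (Set.Ioc 0 t)) (nhds (h 0)) :=
        (hcont 0 Set.self_mem_Ici).mono (fun r hr => hr.1.le)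
      have l2 : Filter.Tendsto h (nhdsWithin 0 (Set.Ioc 0 t)) (nhds (h t)) := by
        refine Filter.Tendsto.congr' ?_ tendsto_const_nhds
        exact Filter.eventuallyEq_of_mem self_mem_nhdsWithin
          (fun r hr => (hconst r hr).symm)
      have heq : h 0 = h t := tendsto_nhds_unique l1 l2
      have : h t = 0 := by rw [← heq, h0]
      exact sub_eq_zero.mp this
  have key : ∀ i ≤ n, ∀ t ≥ (0:ℝ), y i t = Z i t := by
    intro i
    induction i with
    | zero =>
      intro hin
      refine main 0 hin (fun s hs => ?_)
      have h2' : HasDerivAt (Z 0) (x (s - τmin) - x (s - τmax)) s :=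
        Z_hasDerivAt_zero hx τmin τmax s
      have hd := (hy0d s hs).sub h2'
      rw [sub_self] at hd
      exact hd
    | succ j ih =>
      intro hin
      refine main (j + 1) hin (fun s hs => ?_)
      have h1 := hyid (j + 1) (Nat.succ_le_succ (Nat.zero_le j)) hin s hs
      simp only [Nat.add_sub_cancel] at h1
      rw [ih (Nat.le_of_succ_le hin) s hs.le] at h1
      have h2' : HasDerivAt (Z (j + 1))
          (x (s - τmin) * τmin ^ (j + 1) - x (s - τmax) * τmax ^ (j + 1)
            + (↑(j + 1)) * Z j s) s :=
        Z_hasDerivAt_succ hx τmin τmax j s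
      have hd := h1.sub h2'
      rw [sub_self] at hd
      exact hd
  refine ⟨fun t ht i hin => key i hin t ht, fun t ht => ?_⟩
  have hsum : (∫ s in τmin..τmax, x (t - s) * ∑ i ∈ range (n + 1), a i * s ^ i)
      = ∑ i ∈ range (n + 1), a i * y i t := by
    have hint : ∀ u v : ℝ, (∫ s in u..v, x (t - s) * ∑ i ∈ range (n + 1), a i * s ^ i)
        = ∑ i ∈ range (n + 1), a i * ∫ s in u..v, x (t - s) * s ^ i := by
      intro u v
      have he : ∀ s : ℝ, x (t - s) * ∑ i ∈ range (n + 1), a i * s ^ i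
          = ∑ i ∈ range (n + 1), a i * (x (t - s) * s ^ i) := by
        intro s; rw [Finset.mul_sum]; exact Finset.sum_congr rfl fun i _ => by ring
      simp_rw [he]
      rw [intervalIntegral.integral_finset_sum]
      · exact Finset.sum_congr rfl fun i _ => intervalIntegral.integral_const_mul _ _
      · intro i _
        exact (continuous_const.mul ((hx.comp (continuous_const.sub continuous_id)).mul
          (continuous_pow i))).intervalIntegrable _ _
    rw [hint]
    exact Finset.sum_congr rfl fun i hi => by
      rw [key i (Nat.lt_succ_iff.mp (mem_range.mp hi)) t ht.le]
  rw [hsum]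
  exact hxd t ht
end

section
/- Let 0 < τ_min < τ_max be reals, let n be a natural number, let a_0, …, a_n be reals and λ_0, …, λ_n ≥ 0, let F : ℝ → ℝ → ℝ, and let x : ℝ → ℝ be continuous. For each i ≤ n define A_i(t) = ∫_{t−τ_max}^{t−τ_min} x(s) exp(−λ_i(t−s)) ds. Suppose that for every t > 0, x is differentiable at t with derivative F(x(t), Σ_{i=0}^{n} a_i A_i(t)). Then for every t > 0 the tuple (x, A_0, …, A_n) satisfies: x′(t) = F(x(t), Σ_{i=0}^{n} a_i A_i(t)); A_i′(t) = x(t−τ_min) exp(−λ_i τ_min) − x(t−τ_max) exp(−λ_i τ_max) − λ_i A_i(t) for each i ≤ n; and A_i(0) = ∫_{τ_min}^{τ_max} x(−s) exp(−λ_i s) ds for each i ≤ n. -/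
open Finset intervalIntegral in
lemma exp_conv_hasDerivAt (lam : ℝ) (x : ℝ → ℝ) (hx : Continuous x)
    (τmin τmax t : ℝ) :
    HasDerivAt (fun t => ∫ s in (t - τmax)..(t - τmin), x s * Real.exp (-lam * (t - s)))
      (x (t - τmin) * Real.exp (-lam * τmin) - x (t - τmax) * Real.exp (-lam * τmax)
        - lam * ∫ s in (t - τmax)..(t - τmin), x s * Real.exp (-lam * (t - s))) t := by
  set g : ℝ → ℝ := fun s => x s * Real.exp (lam * s) with hg_def
  have hg : Continuous g := hx.mul (Real.continuous_exp.comp (continuous_const.mul continuous_id))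
  set G : ℝ → ℝ := fun u => ∫ s in (0:ℝ)..u, g s with hG_def
  have hGd : ∀ u : ℝ, HasDerivAt G (g u) u := fun u =>
    integral_hasDerivAt_right (hg.intervalIntegrable 0 u)
      (hg.stronglyMeasurableAtFilter _ _) hg.continuousAt
  have key : ∀ t' : ℝ, (∫ s in (t' - τmax)..(t' - τmin), x s * Real.exp (-lam * (t' - s)))
      = Real.exp (-lam * t') * (G (t' - τmin) - G (t' - τmax)) := by
    intro t'
    have h2 : G (t' - τmin) - G (t' - τmax) = ∫ s in (t' - τmax)..(t' - τmin), g s := by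
      rw [hG_def]
      rw [intervalIntegral.integral_interval_sub_left (hg.intervalIntegrable _ _)
        (hg.intervalIntegrable _ _)]
    rw [h2, ← intervalIntegral.integral_const_mul]
    apply intervalIntegral.integral_congr
    intro s _
    simp only [hg_def]
    rw [show -lam * (t' - s) = -lam * t' + lam * s by ring, Real.exp_add]
    ring
  have hfun : (fun t => ∫ s in (t - τmax)..(t - τmin), x s * Real.exp (-lam * (t - s)))
      = fun t => Real.exp (-lam * t) * (G (t - τmin) - G (t - τmax)) := funext key
  rw [hfun, key]
  have hexp : HasDerivAt (fun t : ℝ => Real.exp (-lam * t)) (Real.exp (-lam * t) * -lam) t := by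
    simpa using ((hasDerivAt_id t).const_mul (-lam)).exp
  have h1 : HasDerivAt (fun t : ℝ => G (t - τmin)) (g (t - τmin)) t := by
    simpa [Function.comp_def] using (hGd (t - τmin)).comp t ((hasDerivAt_id t).sub_const τmin)
  have h2 : HasDerivAt (fun t : ℝ => G (t - τmax)) (g (t - τmax)) t := by
    simpa [Function.comp_def] using (hGd (t - τmax)).comp t ((hasDerivAt_id t).sub_const τmax)
  have := hexp.fun_mul (h1.fun_sub h2)
  convert this using 1
  · rfl
  · rfl
  simp only [hg_def]
  rw [show -lam * τmin = -lam * t + lam * (t - τmin) by ring,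
    show -lam * τmax = -lam * t + lam * (t - τmax) by ring, Real.exp_add, Real.exp_add]
  ring

open Finset in
/-- Forward direction of the equivalence between the exponential-kernel distributed DDE
and a system of discrete-delay DDEs: if `x` solves the distributed DDE written via the
truncated exponential convolutions `A_i`, then `(x, A_0, …, A_n)` solves the
discrete-delay system with the stated initial values. -/
theorem exponential_distributed_DDE_to_discrete_system
    (τmin τmax : ℝ) (h0 : 0 < τmin) (h1 : τmin < τmax)
    (n : ℕ) (a lam : ℕ → ℝ) (hlam : ∀ i ≤ n, 0 ≤ lam i) (F : ℝ → ℝ → ℝ)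
    (x : ℝ → ℝ) (hx : Continuous x) (A : ℕ → ℝ → ℝ)
    (hA : ∀ i t,
      A i t = ∫ s in (t - τmax)..(t - τmin), x s * Real.exp (-lam i * (t - s)))
    (hxd : ∀ t > (0 : ℝ),
      HasDerivAt x (F (x t) (∑ i ∈ range (n + 1), a i * A i t)) t) :
    (∀ t > (0 : ℝ),
      HasDerivAt x (F (x t) (∑ i ∈ range (n + 1), a i * A i t)) t ∧
      ∀ i ≤ n,
        HasDerivAt (A i)
          (x (t - τmin) * Real.exp (-lam i * τmin)
            - x (t - τmax) * Real.exp (-lam i * τmax) - lam i * A i t) t) ∧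
    (∀ i ≤ n, A i 0 = ∫ s in τmin..τmax, x (-s) * Real.exp (-lam i * s)) := by
  constructor
  · intro t ht
    refine ⟨hxd t ht, fun i _ => ?_⟩
    have hAi : A i = fun t => ∫ s in (t - τmax)..(t - τmin), x s * Real.exp (-lam i * (t - s)) :=
      funext (hA i)
    rw [hAi]
    exact exp_conv_hasDerivAt (lam i) x hx τmin τmax t
  · intro i _
    rw [hA i 0, show (0:ℝ) - τmax = -τmax by ring, show (0:ℝ) - τmin = -τmin by ring,
      ← intervalIntegral.integral_comp_neg]
    apply intervalIntegral.integral_congr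
    intro s _
    norm_num
end

section
/- Let 0 < τ_min < τ_max be reals, let n be a natural number, let a_0, …, a_n be reals and λ_0, …, λ_n ≥ 0, let F : ℝ → ℝ → ℝ, let x : ℝ → ℝ be continuous, and let B_0, …, B_n : ℝ → ℝ be continuous on [0, ∞) with B_i(0) = ∫_{τ_min}^{τ_max} x(−s) exp(−λ_i s) ds for each i ≤ n. Suppose that for every t > 0: each B_i is differentiable at t with derivative x(t−τ_min) exp(−λ_i τ_min) − x(t−τ_max) exp(−λ_i τ_max) − λ_i B_i(t), and x is differentiable at t with derivative F(x(t), Σ_{i=0}^{n} a_i B_i(t)). Then for every t ≥ 0 and every i ≤ n, B_i(t) = ∫_{t−τ_max}^{t−τ_min} x(s) exp(−λ_i(t−s)) ds, and consequently x satisfies the distributed delay differential equation x′(t) = F(x(t), ∫_{τ_min}^{τ_max} x(t−s) k_exp(s) ds) for every t > 0, where k_exp(s) = Σ_{i=0}^{n} a_i exp(−λ_i s). -/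
open Finset

private lemma aux_const_of_deriv_zero {f : ℝ → ℝ} (hc : ContinuousOn f (Set.Ici 0))
    (hd : ∀ u > (0:ℝ), HasDerivAt f 0 u) : ∀ t ≥ (0:ℝ), f t = f 0 := by
  intro t ht
  rcases eq_or_lt_of_le ht with h | h
  · rw [← h]
  · have hconst : ∀ ε ∈ Set.Ioc (0:ℝ) t, f t = f ε := by
      intro ε hε
      have hsub : Set.Icc ε t ⊆ Set.Ici 0 := fun u hu => le_trans hε.1.le hu.1
      exact constant_of_has_deriv_right_zero (hc.mono hsub)
        (fun u hu => (hd u (lt_of_lt_of_le hε.1 hu.1)).hasDerivWithinAt)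
        t (Set.right_mem_Icc.2 hε.2)
    have h1 : Filter.Tendsto f (nhdsWithin 0 (Set.Ioi 0)) (nhds (f 0)) :=
      (hc.continuousWithinAt Set.self_mem_Ici).mono_left
        (nhdsWithin_mono _ Set.Ioi_subset_Ici_self)
    have h2 : Filter.Tendsto f (nhdsWithin 0 (Set.Ioi 0)) (nhds (f t)) := by
      apply Filter.Tendsto.congr' _ tendsto_const_nhds
      filter_upwards [Ioo_mem_nhdsGT_of_mem (Set.left_mem_Ico.2 h)] with u hu
      exact hconst u ⟨hu.1, hu.2.le⟩
    exact tendsto_nhds_unique h2 h1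


open Finset in
/-- Converse direction of the equivalence between the exponential-kernel distributed DDE
and a system of discrete-delay DDEs: the auxiliary variables `B_i` with matching initial
conditions necessarily equal the truncated exponential convolutions, and consequently
`x` solves the exponential-kernel distributed DDE. -/
theorem discrete_system_to_exponential_distributed_DDE
    (τmin τmax : ℝ) (h0 : 0 < τmin) (h1 : τmin < τmax)
    (n : ℕ) (a lam : ℕ → ℝ) (hlam : ∀ i ≤ n, 0 ≤ lam i) (F : ℝ → ℝ → ℝ)
    (x : ℝ → ℝ) (hx : Continuous x) (B : ℕ → ℝ → ℝ)
    (hBcont : ∀ i ≤ n, ContinuousOn (B i) (Set.Ici 0))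
    (hB0 : ∀ i ≤ n, B i 0 = ∫ s in τmin..τmax, x (-s) * Real.exp (-lam i * s))
    (hBd : ∀ i ≤ n, ∀ t > (0 : ℝ),
      HasDerivAt (B i)
        (x (t - τmin) * Real.exp (-lam i * τmin)
          - x (t - τmax) * Real.exp (-lam i * τmax) - lam i * B i t) t)
    (hxd : ∀ t > (0 : ℝ),
      HasDerivAt x (F (x t) (∑ i ∈ range (n + 1), a i * B i t)) t) :
    (∀ t ≥ (0 : ℝ), ∀ i ≤ n,
      B i t = ∫ s in (t - τmax)..(t - τmin), x s * Real.exp (-lam i * (t - s))) ∧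
    (∀ t > (0 : ℝ),
      HasDerivAt x
        (F (x t)
          (∫ s in τmin..τmax,
            x (t - s) * ∑ i ∈ range (n + 1), a i * Real.exp (-lam i * s))) t) := by
  have key : ∀ i ≤ n, ∀ t ≥ (0:ℝ),
      B i t = ∫ s in (t - τmax)..(t - τmin), x s * Real.exp (-lam i * (t - s)) := by
    intro i hi
    set l := lam i with hl
    set f : ℝ → ℝ := fun u => x u * Real.exp (l * u) with hfdef
    have hfc : Continuous f :=
      hx.mul (Real.continuous_exp.comp (continuous_const.mul continuous_id))
    set G : ℝ → ℝ := fun u => ∫ s in (0:ℝ)..u, f s with hGdef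
    have hG : ∀ u, HasDerivAt G (f u) u := fun u =>
      intervalIntegral.integral_hasDerivAt_right
        (hfc.intervalIntegrable 0 u : IntervalIntegrable f MeasureTheory.volume 0 u)
        (hfc.stronglyMeasurableAtFilter MeasureTheory.volume _) hfc.continuousAt
    have hGc : Continuous G := continuous_iff_continuousAt.2 fun u => (hG u).continuousAt
    have hGint : ∀ p q : ℝ, ∫ s in p..q, f s = G q - G p := by
      intro p q
      have h := intervalIntegral.integral_add_adjacent_intervals
        (μ := MeasureTheory.volume) (hfc.intervalIntegrable 0 p) (hfc.intervalIntegrable p q)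
      simp only [hGdef]
      linarith [h]
    set g : ℝ → ℝ := fun t => Real.exp (l * t) * B i t - (G (t - τmin) - G (t - τmax))
      with hgdef
    have hgc : ContinuousOn g (Set.Ici 0) := by
      apply ContinuousOn.sub
      · exact ((Real.continuous_exp.comp (continuous_const.mul continuous_id)).continuousOn).mul
          (hBcont i hi)
      · exact ((hGc.comp (continuous_id.sub continuous_const)).sub
          (hGc.comp (continuous_id.sub continuous_const))).continuousOn
    have hgd : ∀ u > (0:ℝ), HasDerivAt g 0 u := by
      intro u hu
      have hB' := hBd i hi u hu
      have he : HasDerivAt (fun t : ℝ => Real.exp (l * t)) (Real.exp (l * u) * l) u := by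
        simpa using ((hasDerivAt_id u).const_mul l).exp
      have h1 := he.mul hB'
      have h2a : HasDerivAt (fun t : ℝ => G (t - τmin)) (f (u - τmin)) u := by
        have := (hG (u - τmin)).comp u ((hasDerivAt_id u).sub_const τmin)
        simpa [Function.comp_def] using this
      have h2b : HasDerivAt (fun t : ℝ => G (t - τmax)) (f (u - τmax)) u := by
        have := (hG (u - τmax)).comp u ((hasDerivAt_id u).sub_const τmax)
        simpa [Function.comp_def] using this
      have h3 := h1.sub (h2a.sub h2b)
      have e1 : Real.exp (l * (u - τmin)) = Real.exp (l * u) * Real.exp (-l * τmin) := by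
        rw [← Real.exp_add]; ring_nf
      have e2 : Real.exp (l * (u - τmax)) = Real.exp (l * u) * Real.exp (-l * τmax) := by
        rw [← Real.exp_add]; ring_nf
      have heq : Real.exp (l * u) * l * B i u
          + Real.exp (l * u) * (x (u - τmin) * Real.exp (-l * τmin)
            - x (u - τmax) * Real.exp (-l * τmax) - l * B i u)
          - (f (u - τmin) - f (u - τmax)) = 0 := by
        simp only [hfdef, e1, e2]; ring
      rw [heq] at h3
      exact h3
    have hg0 : g 0 = 0 := by
      have hcv : (∫ s in τmin..τmax, x (-s) * Real.exp (-l * s))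
          = ∫ s in (-τmax)..(-τmin), f s := by
        rw [← intervalIntegral.integral_comp_neg f]
        apply intervalIntegral.integral_congr
        intro s _
        simp only [hfdef, mul_neg, neg_mul]
      simp only [hgdef, hB0 i hi, ← hl, hcv, hGint, mul_zero, Real.exp_zero, one_mul,
        zero_sub]
      ring
    have hzero := aux_const_of_deriv_zero hgc hgd
    intro t ht
    have hgt : g t = 0 := by rw [hzero t ht, hg0]
    have hBt : Real.exp (l * t) * B i t = G (t - τmin) - G (t - τmax) := by
      simp only [hgdef] at hgt; linarith
    have hrhs : (∫ s in (t - τmax)..(t - τmin), x s * Real.exp (-l * (t - s)))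
        = Real.exp (-(l * t)) * ∫ s in (t - τmax)..(t - τmin), f s := by
      rw [← intervalIntegral.integral_const_mul]
      apply intervalIntegral.integral_congr
      intro s _
      simp only [hfdef]
      rw [show Real.exp (-(l * t)) * (x s * Real.exp (l * s))
          = x s * (Real.exp (-(l * t)) * Real.exp (l * s)) by ring, ← Real.exp_add]
      ring_nf
    rw [hrhs, hGint]
    rw [← hBt]
    rw [← mul_assoc, ← Real.exp_add]
    simp
  constructor
  · intro t ht i hi; exact key i hi t ht
  · intro t ht
    have hsum : (∫ s in τmin..τmax,
        x (t - s) * ∑ i ∈ range (n + 1), a i * Real.exp (-lam i * s))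
        = ∑ i ∈ range (n + 1), a i * B i t := by
      have hre : (fun s => x (t - s) * ∑ i ∈ range (n + 1), a i * Real.exp (-lam i * s))
          = fun s => ∑ i ∈ range (n + 1), a i * (x (t - s) * Real.exp (-lam i * s)) := by
        funext s
        rw [Finset.mul_sum]
        apply Finset.sum_congr rfl
        intro i _
        ring
      rw [hre, intervalIntegral.integral_finset_sum]
      · apply Finset.sum_congr rfl
        intro i hi
        have hi' : i ≤ n := Nat.lt_succ_iff.mp (Finset.mem_range.mp hi)
        rw [intervalIntegral.integral_const_mul]
        congr 1
        rw [key i hi' t ht.le]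
        have hcs := intervalIntegral.integral_comp_sub_left
          (fun u => x u * Real.exp (-lam i * (t - u))) t (a := τmin) (b := τmax)
        simpa using hcs
      · intro i _
        exact (continuous_const.mul ((hx.comp (continuous_const.sub continuous_id)).mul
          (Real.continuous_exp.comp (continuous_const.mul continuous_id)))).intervalIntegrable _ _
    rw [hsum]
    exact hxd t ht
end

section
/- Let 0 < τ_min < τ_max and γ, β be reals, let x : ℝ → ℝ be continuous, and let z : ℝ → ℝ be continuous on [0, ∞) with z(0) = (1/(τ_max − τ_min)) ∫_{−τ_max}^{−τ_min} x(s)/(1 + x(s)^{10}) ds. Suppose that for every t > 0: z is differentiable at t with derivative (1/(τ_max − τ_min)) ( x(t−τ_min)/(1 + x(t−τ_min)^{10}) − x(t−τ_max)/(1 + x(t−τ_max)^{10}) ), and x is differentiable at t with derivative −γ x(t) + β z(t). Then for every t ≥ 0, z(t) = (1/(τ_max − τ_min)) ∫_{t−τ_max}^{t−τ_min} x(s)/(1 + x(s)^{10}) ds, and consequently x satisfies the uniformly distributed Mackey-Glass equation x′(t) = −γ x(t) + β (1/(τ_max − τ_min)) ∫_{t−τ_max}^{t−τ_min} x(s)/(1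 + x(s)^{10}) ds for every t > 0. -/
/-- Converse direction of the equivalence between the uniformly distributed Mackey-Glass
equation and a system of two discrete-delay DDEs: the auxiliary variable `z` with matching
initial condition necessarily equals the convolution integral, and consequently `x`
solves the uniformly distributed Mackey-Glass equation. -/
theorem mackey_glass_discrete_system_to_distributed
    (τmin τmax γ β : ℝ) (h0 : 0 < τmin) (h1 : τmin < τmax)
    (x : ℝ → ℝ) (hx : Continuous x) (z : ℝ → ℝ)
    (hzcont : ContinuousOn z (Set.Ici 0))
    (hz0 : z 0 = (τmax - τmin)⁻¹ * ∫ s in (-τmax)..(-τmin), x s / (1 + x s ^ 10))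
    (hzd : ∀ t > (0 : ℝ),
      HasDerivAt z
        ((τmax - τmin)⁻¹ *
          (x (t - τmin) / (1 + x (t - τmin) ^ 10)
            - x (t - τmax) / (1 + x (t - τmax) ^ 10))) t)
    (hxd : ∀ t > (0 : ℝ), HasDerivAt x (-γ * x t + β * z t) t) :
    (∀ t ≥ (0 : ℝ),
      z t = (τmax - τmin)⁻¹ * ∫ s in (t - τmax)..(t - τmin), x s / (1 + x s ^ 10)) ∧
    (∀ t > (0 : ℝ),
      HasDerivAt x
        (-γ * x t + β * ((τmax - τmin)⁻¹ *
          ∫ s in (t - τmax)..(t - τmin), x s / (1 + x s ^ 10))) t) := by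
  have hfpos : ∀ s : ℝ, (0:ℝ) < 1 + x s ^ 10 := fun s => by positivity
  set f : ℝ → ℝ := fun s => x s / (1 + x s ^ 10) with hf_def
  have hf : Continuous f := hx.div (by continuity) (fun s => (hfpos s).ne')
  set c : ℝ := (τmax - τmin)⁻¹ with hc_def
  set F : ℝ → ℝ := fun t => c * ∫ s in (t - τmax)..(t - τmin), f s with hF_def
  have hG : ∀ u : ℝ, HasDerivAt (fun v => ∫ s in (0:ℝ)..v, f s) (f u) u := fun u =>
    intervalIntegral.integral_hasDerivAt_right (hf.intervalIntegrable _ _)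
      (hf.stronglyMeasurableAtFilter _ _) hf.continuousAt
  have hFeq : ∀ t : ℝ, F t = c * ((∫ s in (0:ℝ)..(t - τmin), f s)
      - ∫ s in (0:ℝ)..(t - τmax), f s) := by
    intro t
    rw [hF_def]
    rw [intervalIntegral.integral_interval_sub_left (hf.intervalIntegrable _ _)
      (hf.intervalIntegrable _ _)]
  have hF : ∀ t : ℝ, HasDerivAt F (c * (f (t - τmin) - f (t - τmax))) t := by
    intro t
    have h1 : HasDerivAt (fun u : ℝ => ∫ s in (0:ℝ)..(u - τmin), f s) (f (t - τmin)) t := by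
      have := (hG (t - τmin)).comp t ((hasDerivAt_id t).sub_const τmin)
      simpa [Function.comp_def] using this
    have h2 : HasDerivAt (fun u : ℝ => ∫ s in (0:ℝ)..(u - τmax), f s) (f (t - τmax)) t := by
      have := (hG (t - τmax)).comp t ((hasDerivAt_id t).sub_const τmax)
      simpa [Function.comp_def] using this
    have h3 := (h1.sub h2).const_mul c
    refine HasDerivAt.congr_of_eventuallyEq h3 ?_
    filter_upwards with u
    exact hFeq u
  have hFc : Continuous F := by
    rw [continuous_iff_continuousAt]; exact fun t => (hF t).continuousAt
  have hg0 : z 0 - F 0 = 0 := by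
    rw [hz0]; simp [hF_def, hc_def, hf_def, zero_sub]
  have key : ∀ t ≥ (0:ℝ), z t = F t := by
    intro t ht
    rcases eq_or_lt_of_le ht with h | h
    · rw [← h]; linarith [hg0]
    · set g : ℝ → ℝ := fun u => z u - F u with hg_def
      have hgc : ContinuousOn g (Set.Icc 0 t) :=
        (hzcont.mono Set.Icc_subset_Ici_self).sub hFc.continuousOn
      have hgd : ∀ u ∈ Set.Ioo (0:ℝ) t, HasDerivAt g 0 u := by
        intro u hu
        have := (hzd u hu.1).sub (hF u)
        simpa [hg_def, hf_def, hc_def, Pi.sub_def] using this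
      have hdiff : DifferentiableOn ℝ g (interior (Set.Icc 0 t)) := by
        rw [interior_Icc]
        exact fun u hu => (hgd u hu).differentiableAt.differentiableWithinAt
      have hderiv0 : ∀ u ∈ interior (Set.Icc 0 t), deriv g u = 0 := by
        rw [interior_Icc]
        exact fun u hu => (hgd u hu).deriv
      have hmono := monotoneOn_of_deriv_nonneg (convex_Icc (0:ℝ) t) hgc hdiff
        (fun u hu => (hderiv0 u hu).ge)
      have hanti := antitoneOn_of_deriv_nonpos (convex_Icc (0:ℝ) t) hgc hdiff
        (fun u hu => (hderiv0 u hu).le)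
      have h0m : (0:ℝ) ∈ Set.Icc 0 t := Set.left_mem_Icc.2 ht
      have htm : t ∈ Set.Icc 0 t := Set.right_mem_Icc.2 ht
      have h1' := hmono h0m htm ht
      have h2' := hanti h0m htm ht
      have hg0' : g 0 = 0 := hg0
      have : g t = 0 := le_antisymm (by linarith) (by linarith)
      have := sub_eq_zero.mp this
      exact this
  refine ⟨fun t ht => by simpa [hF_def, hf_def, hc_def] using key t ht, fun t ht => ?_⟩
  have h := hxd t ht
  rw [key t ht.le] at h
  simpa [hF_def, hf_def, hc_def] using h
end
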